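/- arXiv:1810.10847 — 5 statements merged into one kernel-verified Lean document; each statement's English description precedes it below -/
import Mathlib

section
/- Let α, β ∈ ℂ_I^n for a fixed imaginary unit quaternion I (i.e., each component lies in the real plane spanned by 1 and I). Define g(J) = Σₜ |αₜ + Jβₜ|² for imaginary unit quaternions J. Then g(J) is an affine function of u, where u is the coefficient of I in the orthogonal decomposition J = uI + w. Consequently, the maximum of g over all imaginary units J is attained at J = I or J = -I, and likewise the minimum is attained at J = I or J = -I. -/
/-!
Write `⟪a, J b⟫ = ⟪a b*, J⟫`. For `a, b ∈ ℂ_I` the product `a b*` again lies in `ℂ_I`, so it is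
orthogonal to the part `w` of `J = u I + w`, and `⟪a, J b⟫ = u ⟪a, I b⟫`. Since `|J| = 1`, this gives
`|a + J b|² = |a|² + |b|² + 2u ⟪a, I b⟫`, affine in `u`. As `u = ⟪J, I⟫ ∈ [-1, 1]`, an affine function
of `u` takes its extreme values at `u = ±1`, i.e. at `J = ±I`.
-/

open Finset Quaternion
open scoped RealInnerProductSpace

namespace Quaternion

theorem norm_eq_one_of_sq_eq_neg_one {J : ℍ} (hJ : J ^ 2 = -1) : ‖J‖ = 1 := by
  have h : ‖J‖ ^ 2 = 1 := by rw [← norm_pow, hJ, norm_neg, norm_one]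
  nlinarith [norm_nonneg J]

theorem star_eq_neg_of_sq_eq_neg_one {J : ℍ} (hJ : J ^ 2 = -1) : star J = -J := by
  have hJ0 : J ≠ 0 := by
    rintro rfl
    norm_num at hJ
  refine mul_left_cancel₀ hJ0 ?_
  rw [self_mul_star, normSq_eq_norm_mul_self, norm_eq_one_of_sq_eq_neg_one hJ, mul_one,
    mul_neg, ← sq, hJ, neg_neg, coe_one]

theorem re_eq_zero_of_sq_eq_neg_one {J : ℍ} (hJ : J ^ 2 = -1) : J.re = 0 :=
  star_eq_neg.mp (star_eq_neg_of_sq_eq_neg_one hJ)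

theorem inner_mul_eq_inner_mul_star (a b J : ℍ) :
    ⟪a, J * b⟫ = ⟪a * star b, J⟫ := by
  rw [inner_def, inner_def, star_mul, ← mul_assoc]

/-- `a ∈ ℂ_I = ℝ + ℝ I`. -/
def MemSlice (I a : ℍ) : Prop := ∃ x y : ℝ, a = x + y * I

theorem coe_add_coe_mul_eq_smul (x y : ℝ) (I : ℍ) : (x : ℍ) + y * I = x • 1 + y • I := by
  rw [← coe_mul_eq_smul, mul_one, coe_mul_eq_smul]

theorem MemSlice.mul_star {I a b : ℍ} (hI : I ^ 2 = -1) (ha : MemSlice I a) (hb : MemSlice I b) :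
    MemSlice I (a * star b) := by
  obtain ⟨x₁, y₁, rfl⟩ := ha
  obtain ⟨x₂, y₂, rfl⟩ := hb
  refine ⟨x₁ * x₂ + y₁ * y₂, y₁ * x₂ - x₁ * y₂, ?_⟩
  have hII : I * I = -1 := by rw [← sq, hI]
  simp only [coe_add_coe_mul_eq_smul, star_add, star_smul, star_one,
    star_eq_neg_of_sq_eq_neg_one hI, add_mul, mul_add, smul_mul_assoc, mul_smul_comm, one_mul,
    mul_one, mul_neg, hII]
  module

theorem MemSlice.inner_eq_zero {I a w : ℍ} (ha : MemSlice I a) (hw1 : ⟪w, 1⟫ = 0)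
    (hwI : ⟪w, I⟫ = 0) : ⟪a, w⟫ = 0 := by
  obtain ⟨x, y, rfl⟩ := ha
  rw [coe_add_coe_mul_eq_smul, inner_add_left, real_inner_smul_left, real_inner_smul_left,
    real_inner_comm, hw1, real_inner_comm, hwI]
  ring

theorem MemSlice.inner_mul_eq {I a b J w : ℍ} {u : ℝ} (hI : I ^ 2 = -1) (ha : MemSlice I a)
    (hb : MemSlice I b) (hJ : J = u • I + w) (hw1 : ⟪w, 1⟫ = 0) (hwI : ⟪w, I⟫ = 0) :
    ⟪a, J * b⟫ = u * ⟪a, I * b⟫ := by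
  rw [inner_mul_eq_inner_mul_star, inner_mul_eq_inner_mul_star, hJ, inner_add_right,
    real_inner_smul_right, ((ha.mul_star hI hb).inner_eq_zero hw1 hwI), add_zero]

theorem MemSlice.norm_add_mul_sq {I a b J w : ℍ} {u : ℝ} (hI : I ^ 2 = -1) (ha : MemSlice I a)
    (hb : MemSlice I b) (hJ : J ^ 2 = -1) (hdec : J = u • I + w) (hw1 : ⟪w, 1⟫ = 0)
    (hwI : ⟪w, I⟫ = 0) :
    ‖a + J * b‖ ^ 2 = ‖a‖ ^ 2 + ‖b‖ ^ 2 + 2 * u * ⟪a, I * b⟫ := by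
  rw [norm_add_sq_real, ha.inner_mul_eq hI hb hdec hw1 hwI, norm_mul,
    norm_eq_one_of_sq_eq_neg_one hJ, one_mul]
  ring

theorem inner_one_of_sq_eq_neg_one {J : ℍ} (hJ : J ^ 2 = -1) : ⟪J, 1⟫ = 0 := by
  simp [inner_def, re_eq_zero_of_sq_eq_neg_one hJ]

theorem exists_eq_smul_add_of_sq_eq_neg_one {I J : ℍ} (hI : I ^ 2 = -1) (hJ : J ^ 2 = -1) :
    ∃ (u : ℝ) (w : ℍ), J = u • I + w ∧ ⟪w, 1⟫ = 0 ∧ ⟪w, I⟫ = 0 ∧ |u| ≤ 1 := by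
  have hInorm := norm_eq_one_of_sq_eq_neg_one hI
  refine ⟨⟪J, I⟫, J - ⟪J, I⟫ • I, by abel, ?_, ?_, ?_⟩
  · rw [inner_sub_left, real_inner_smul_left, inner_one_of_sq_eq_neg_one hI,
      inner_one_of_sq_eq_neg_one hJ, mul_zero, sub_zero]
  · rw [inner_sub_left, real_inner_smul_left, real_inner_self_eq_norm_sq, hInorm]
    ring
  · simpa [norm_eq_one_of_sq_eq_neg_one hJ, hInorm] using abs_real_inner_le_norm J I

end Quaternion

theorem le_max_sub_add_and_min_sub_add_le {c d u : ℝ} (hu : |u| ≤ 1) :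
    c - d * u ≤ max (c - d) (c + d) ∧ min (c - d) (c + d) ≤ c - d * u := by
  obtain ⟨hu₁, hu₂⟩ := abs_le.mp hu
  rcases le_total 0 d with hd | hd
  · exact ⟨le_max_of_le_right (by nlinarith), min_le_of_left_le (by nlinarith)⟩
  · exact ⟨le_max_of_le_left (by nlinarith), min_le_of_right_le (by nlinarith)⟩

/-- For `α, β ∈ ℂ_I^n`, the function `g(J) = Σₜ |αₜ + Jβₜ|²` over imaginary
unit quaternions `J` is an affine function of the coefficient `u` of `I` in the orthogonal
decomposition `J = u • I + w`; consequently its maximum over all imaginary units is attained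
at `J = I` or `J = -I`, and likewise its minimum. -/
theorem stmt3 (n : ℕ) (I : Quaternion ℝ) (hI : I ^ 2 = -1)
    (α β : Fin n → Quaternion ℝ)
    (hα : ∀ t, ∃ x y : ℝ, α t = (x : Quaternion ℝ) + (y : Quaternion ℝ) * I)
    (hβ : ∀ t, ∃ x y : ℝ, β t = (x : Quaternion ℝ) + (y : Quaternion ℝ) * I)
    (g : Quaternion ℝ → ℝ)
    (hg : ∀ J, g J = ∑ t, ‖α t + J * β t‖ ^ 2) :
    (∃ c d : ℝ, ∀ (J w : Quaternion ℝ) (u : ℝ), J ^ 2 = -1 → J = u • I + w →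
        @inner ℝ _ _ w (1 : Quaternion ℝ) = 0 → @inner ℝ _ _ w I = 0 →
        g J = c - d * u) ∧
    (∀ J : Quaternion ℝ, J ^ 2 = -1 →
        g J ≤ max (g I) (g (-I)) ∧ min (g I) (g (-I)) ≤ g J) := by
  set c := ∑ t, (‖α t‖ ^ 2 + ‖β t‖ ^ 2)
  set d := -(2 * ∑ t, ⟪α t, I * β t⟫)
  have affine (J w : ℍ) (u : ℝ) (hJ : J ^ 2 = -1) (hdec : J = u • I + w) (hw1 : ⟪w, 1⟫ = 0)
      (hwI : ⟪w, I⟫ = 0) : g J = c - d * u := by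
    simp only [hg, MemSlice.norm_add_mul_sq hI (hα _) (hβ _) hJ hdec hw1 hwI, sum_add_distrib,
      c, d, mul_assoc, ← mul_sum]
    ring
  refine ⟨⟨c, d, affine⟩, fun J hJ => ?_⟩
  have hgI : g I = c - d := by
    simpa using affine I 0 1 hI (by simp) (inner_zero_left _) (inner_zero_left _)
  have hgnI : g (-I) = c + d := by
    simpa using affine (-I) 0 (-1) (by rw [neg_sq, hI]) (by simp) (inner_zero_left _) (inner_zero_left _)
  obtain ⟨u, w, hdec, hw1, hwI, hu⟩ := exists_eq_smul_add_of_sq_eq_neg_one hI hJ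
  rw [affine J w u hJ hdec hw1 hwI, hgI, hgnI]
  exact le_max_sub_add_and_min_sub_add_le hu
end

section
/- (Representation formula) Let f be a slice function on Ω_D with values in ℍⁿ, and let J, K be imaginary unit quaternions with J ≠ K. Then for every imaginary unit I and α, β ∈ ℝⁿ with α + iβ ∈ D: f(α + Iβ) = (I - K)·((J - K)⁻¹·f(α + Jβ)) - (I - J)·((J - K)⁻¹·f(α + Kβ)). -/
theorem stmt6_aux {A : Type*} [DivisionRing A] (I J K a b : A)
    (hJ : J ^ 2 = -1) (hK : K ^ 2 = -1) (hne : J - K ≠ 0) :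
    (I - K) * ((J - K)⁻¹ * (a + J * b)) - (I - J) * ((J - K)⁻¹ * (a + K * b))
      = a + I * b := by
  have h1 : (J - K) * (J - K)⁻¹ = 1 := mul_inv_cancel₀ hne
  have h2 : (J - K)⁻¹ * (J - K) = 1 := inv_mul_cancel₀ hne
  have e1 : J * (J - K) = -((J - K) * K) := by
    rw [mul_sub, sub_mul, ← pow_two, ← pow_two, hJ, hK]; noncomm_ring
  have e2 : K * (J - K) = -((J - K) * J) := by
    rw [mul_sub, sub_mul, ← pow_two, ← pow_two, hJ, hK]; noncomm_ring
  have hqJ : (J - K)⁻¹ * J = -(K * (J - K)⁻¹) := by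
    calc (J - K)⁻¹ * J = (J - K)⁻¹ * J * ((J - K) * (J - K)⁻¹) := by rw [h1, mul_one]
    _ = (J - K)⁻¹ * (J * (J - K)) * (J - K)⁻¹ := by noncomm_ring
    _ = (J - K)⁻¹ * (-((J - K) * K)) * (J - K)⁻¹ := by rw [e1]
    _ = -(((J - K)⁻¹ * (J - K)) * (K * (J - K)⁻¹)) := by noncomm_ring
    _ = -(K * (J - K)⁻¹) := by rw [h2, one_mul]
  have hqK : (J - K)⁻¹ * K = -(J * (J - K)⁻¹) := by
    calc (J - K)⁻¹ * K = (J - K)⁻¹ * K * ((J - K) * (J - K)⁻¹) := by rw [h1, mul_one]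
    _ = (J - K)⁻¹ * (K * (J - K)) * (J - K)⁻¹ := by noncomm_ring
    _ = (J - K)⁻¹ * (-((J - K) * J)) * (J - K)⁻¹ := by rw [e2]
    _ = -(((J - K)⁻¹ * (J - K)) * (J * (J - K)⁻¹)) := by rw [mul_neg, neg_mul]; noncomm_ring
    _ = -(J * (J - K)⁻¹) := by rw [h2, one_mul]
  have ha : ((J - K) * ((J - K)⁻¹ * a)) = a := by rw [← mul_assoc, h1, one_mul]
  have hb : ((J - K) * ((J - K)⁻¹ * b)) = b := by rw [← mul_assoc, h1, one_mul]
  calc (I - K) * ((J - K)⁻¹ * (a + J * b)) - (I - J) * ((J - K)⁻¹ * (a + K * b))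
      = (J - K) * ((J - K)⁻¹ * a)
        + ((I - K) * (((J - K)⁻¹ * J) * b) - (I - J) * (((J - K)⁻¹ * K) * b)) := by
        noncomm_ring
    _ = a + ((I - K) * (-(K * ((J - K)⁻¹ * b))) - (I - J) * (-(J * ((J - K)⁻¹ * b)))) := by
        rw [ha, hqJ, hqK]; noncomm_ring
    _ = a + (I * (J - K) - (J ^ 2 - K ^ 2)) * ((J - K)⁻¹ * b) := by noncomm_ring
    _ = a + I * ((J - K) * ((J - K)⁻¹ * b)) := by rw [hJ, hK]; noncomm_ring
    _ = a + I * b := by rw [hb]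

/-- Representation formula: Let `f` be the slice function on `Ω_D ⊂ ℍⁿ`
induced by the stem function `F = F₁ + iF₂` (with `(F₁, F₂)` an even-odd pair on the
conjugation-invariant set `D ⊂ ℂⁿ`), via `f(α + Lβ) = F₁(α + iβ) + L F₂(α + iβ)`.
Then for imaginary units `J ≠ K` and any imaginary unit `I`, and `α, β ∈ ℝⁿ` with
`α + iβ ∈ D`:
`f(α + Iβ) = (I - K)((J - K)⁻¹ f(α + Jβ)) - (I - J)((J - K)⁻¹ f(α + Kβ))`
(componentwise left multiplication). -/
theorem stmt6 (n : ℕ) (D : Set (Fin n → ℂ))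
    (hD : ∀ z ∈ D, (fun t => (starRingEnd ℂ) (z t)) ∈ D)
    (F₁ F₂ : (Fin n → ℂ) → (Fin n → Quaternion ℝ))
    (heven : ∀ z ∈ D, F₁ (fun t => (starRingEnd ℂ) (z t)) = F₁ z)
    (hodd : ∀ z ∈ D, F₂ (fun t => (starRingEnd ℂ) (z t)) = -F₂ z)
    (f : Quaternion ℝ → (Fin n → ℂ) → (Fin n → Quaternion ℝ))
    (hf : ∀ (L : Quaternion ℝ) (z : Fin n → ℂ) (t : Fin n),
      f L z t = F₁ z t + L * F₂ z t)
    (I J K : Quaternion ℝ) (hI : I ^ 2 = -1) (hJ : J ^ 2 = -1) (hK : K ^ 2 = -1)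
    (hJK : J ≠ K)
    (α β : Fin n → ℝ)
    (hz : (fun t => (α t : ℂ) + (β t : ℂ) * Complex.I) ∈ D) :
    ∀ t, f I (fun t => (α t : ℂ) + (β t : ℂ) * Complex.I) t
        = (I - K) * ((J - K)⁻¹ * f J (fun t => (α t : ℂ) + (β t : ℂ) * Complex.I) t)
          - (I - J) * ((J - K)⁻¹ * f K (fun t => (α t : ℂ) + (β t : ℂ) * Complex.I) t) := by
  intro t
  rw [hf I, hf J, hf K]
  exact (stmt6_aux I J K _ _ hJ hK (sub_ne_zero.mpr hJK)).symm
end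

section
/- (Representation formula, symmetric form) Let f be a slice function on Ω_D with values in ℍⁿ. Then for all imaginary units I, J and α, β ∈ ℝⁿ with α + iβ ∈ D: f(α + Iβ) = (1/2)(f(α + Jβ) + f(α - Jβ)) - (I/2)·(J·(f(α + Jβ) - f(α - Jβ))). -/
/-- Representation formula, symmetric form: Let `f` be the slice function on
`Ω_D ⊂ ℍⁿ` induced by a stem function `F = F₁ + iF₂` with `(F₁, F₂)` an even-odd pair, via
`f(α + Lβ) = F₁(α + iβ) + L F₂(α + iβ)`. Then for all imaginary units `I, J` and
`α, β ∈ ℝⁿ` with `α + iβ ∈ D`: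
`f(α + Iβ) = (1/2)(f(α + Jβ) + f(α - Jβ)) - (I/2)(J(f(α + Jβ) - f(α - Jβ)))`,
where `α - Jβ = α + (-J)β` and multiplication is componentwise on the left. -/
theorem stmt7 (n : ℕ) (D : Set (Fin n → ℂ))
    (hD : ∀ z ∈ D, (fun t => (starRingEnd ℂ) (z t)) ∈ D)
    (F₁ F₂ : (Fin n → ℂ) → (Fin n → Quaternion ℝ))
    (heven : ∀ z ∈ D, F₁ (fun t => (starRingEnd ℂ) (z t)) = F₁ z)
    (hodd : ∀ z ∈ D, F₂ (fun t => (starRingEnd ℂ) (z t)) = -F₂ z)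
    (f : Quaternion ℝ → (Fin n → ℂ) → (Fin n → Quaternion ℝ))
    (hf : ∀ (L : Quaternion ℝ) (z : Fin n → ℂ) (t : Fin n),
      f L z t = F₁ z t + L * F₂ z t)
    (I J : Quaternion ℝ) (hI : I ^ 2 = -1) (hJ : J ^ 2 = -1)
    (α β : Fin n → ℝ)
    (hz : (fun t => (α t : ℂ) + (β t : ℂ) * Complex.I) ∈ D) :
    ∀ t, f I (fun t => (α t : ℂ) + (β t : ℂ) * Complex.I) t
        = (1 / 2 : ℝ) • (f J (fun t => (α t : ℂ) + (β t : ℂ) * Complex.I) t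
                        + f (-J) (fun t => (α t : ℂ) + (β t : ℂ) * Complex.I) t)
          - (I / 2) * (J * (f J (fun t => (α t : ℂ) + (β t : ℂ) * Complex.I) t
                        - f (-J) (fun t => (α t : ℂ) + (β t : ℂ) * Complex.I) t)) := by
  intro t
  simp only [hf]
  set a := F₁ (fun t => (α t : ℂ) + (β t : ℂ) * Complex.I) t with ha
  set b := F₂ (fun t => (α t : ℂ) + (β t : ℂ) * Complex.I) t with hb
  have hJ' : J * J = -1 := by rw [← sq, hJ]
  have key : ∀ (c x : Quaternion ℝ), (c / 2) * (x + x) = c * x := by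
    intro c x
    have h2 : (2:Quaternion ℝ)⁻¹ + 2⁻¹ = 1 := by
      have hc : ((2:ℝ):Quaternion ℝ) = 2 := by norm_cast
      rw [← hc, ← Quaternion.coe_inv, ← Quaternion.coe_add]
      norm_num
    rw [div_eq_mul_inv, mul_assoc, mul_add, ← add_mul, h2, one_mul]
  have h1 : a + J * b + (a + -J * b) = a + a := by
    simp only [neg_mul]; abel
  have h2 : a + J * b - (a + -J * b) = J * b + J * b := by
    simp only [neg_mul]; abel
  have h3 : J * (J * b + J * b) = -b + -b := by
    rw [mul_add, ← mul_assoc, hJ', neg_one_mul]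
  rw [h1, h2, h3, key, smul_add, ← add_smul]
  norm_num
end

section
/- Let f be a slice function on Ω_D with f(D_I) ⊆ ℂ_I^n for some imaginary unit I. Write α = (1/2)(f(z) + f(z̄)) and β = -(I/2)(f(z) - f(z̄)) for z = a + Ib ∈ D_I (with a, b ∈ ℝⁿ). Then both α and β lie in ℂ_I^n, and f(a + Jb) = α + Jβ for every imaginary unit J. -/
/-! Evenness of `F₁` and oddness of `F₂` give `f(z̄) = F₁(z) - I F₂(z)` on the `I`-slice, so the two
averages `A`, `B` recover exactly the stem components `F₁(z)`, `F₂(z)`; these lie in `ℂ_I^n` by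
hypothesis, and `f(a + Jb) = F₁(z) + J F₂(z)` is the definition of the slice function. -/

lemma half_smul_add_add_neg {M : Type*} [AddCommGroup M] [Module ℝ M] (p x : M) :
    (1 / 2 : ℝ) • ((p + x) + (p + -x)) = p := by
  rw [show (p + x) + (p + -x) = (2 : ℝ) • p by rw [two_smul]; abel, smul_smul]
  norm_num

lemma neg_half_mul_sub_of_sq_eq_neg_one {R : Type*} [DivisionRing R] [Algebra ℝ R]
    {L : R} (hL : L ^ 2 = -1) (p q : R) :
    -(L / 2) * ((p + L * q) - (p + -(L * q))) = q := by
  have : CharZero R := charZero_of_injective_algebraMap (algebraMap ℝ R).injective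
  rw [show (p + L * q) - (p + -(L * q)) = 2 * (L * q) by rw [two_mul]; abel, ← mul_assoc,
    neg_mul, div_mul_cancel₀ L two_ne_zero, neg_mul, ← mul_assoc, ← sq, hL, neg_one_mul, neg_neg]

theorem stmt9_general (n : ℕ) (D : Set (Fin n → ℂ))
    (F₁ F₂ : (Fin n → ℂ) → (Fin n → Quaternion ℝ))
    (heven : ∀ z ∈ D, F₁ (fun t => (starRingEnd ℂ) (z t)) = F₁ z)
    (hodd : ∀ z ∈ D, F₂ (fun t => (starRingEnd ℂ) (z t)) = -F₂ z)
    (f : Quaternion ℝ → (Fin n → ℂ) → (Fin n → Quaternion ℝ))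
    (hf : ∀ (L : Quaternion ℝ) (z : Fin n → ℂ) (t : Fin n),
      f L z t = F₁ z t + L * F₂ z t)
    (I : Quaternion ℝ) (hI : I ^ 2 = -1)
    (hrange : ∀ z ∈ D, ∀ t,
      (∃ x y : ℝ, F₁ z t = (x : Quaternion ℝ) + (y : Quaternion ℝ) * I) ∧
      (∃ x y : ℝ, F₂ z t = (x : Quaternion ℝ) + (y : Quaternion ℝ) * I))
    (a b : Fin n → ℝ)
    (hz : (fun t => (a t : ℂ) + (b t : ℂ) * Complex.I) ∈ D)
    (A B : Fin n → Quaternion ℝ)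
    (hA : ∀ t, A t = (1 / 2 : ℝ) •
      (f I (fun t => (a t : ℂ) + (b t : ℂ) * Complex.I) t
        + f I (fun t => (starRingEnd ℂ) ((a t : ℂ) + (b t : ℂ) * Complex.I)) t))
    (hB : ∀ t, B t = -(I / 2) *
      (f I (fun t => (a t : ℂ) + (b t : ℂ) * Complex.I) t
        - f I (fun t => (starRingEnd ℂ) ((a t : ℂ) + (b t : ℂ) * Complex.I)) t)) :
    (∀ t, (∃ x y : ℝ, A t = (x : Quaternion ℝ) + (y : Quaternion ℝ) * I) ∧
          (∃ x y : ℝ, B t = (x : Quaternion ℝ) + (y : Quaternion ℝ) * I)) ∧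
    (∀ J : Quaternion ℝ, J ^ 2 = -1 → ∀ t,
      f J (fun t => (a t : ℂ) + (b t : ℂ) * Complex.I) t = A t + J * B t) := by
  set z : Fin n → ℂ := fun t => (a t : ℂ) + (b t : ℂ) * Complex.I
  have hconj : ∀ t, f I (fun t => (starRingEnd ℂ) (z t)) t = F₁ z t + -(I * F₂ z t) := by
    intro t
    rw [hf, heven z hz, hodd z hz, Pi.neg_apply, mul_neg]
  have hA_eq : ∀ t, A t = F₁ z t := fun t => by
    rw [hA, hconj, hf, half_smul_add_add_neg]
  have hB_eq : ∀ t, B t = F₂ z t := fun t => by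
    rw [hB, hconj, hf, neg_half_mul_sub_of_sq_eq_neg_one hI]
  refine ⟨fun t => ?_, fun J _ t => ?_⟩
  · rw [hA_eq, hB_eq]
    exact hrange z hz t
  · rw [hf, hA_eq, hB_eq]

/-- Let `f` be the slice function induced by an even-odd stem pair with
`f(D_I) ⊆ ℂ_I^n` for an imaginary unit `I`. For `z = a + Ib ∈ D_I` set
`A = (1/2)(f(z) + f(z̄))` and `B = -(I/2)(f(z) - f(z̄))`. Then `A, B ∈ ℂ_I^n` and
`f(a + Jb) = A + J B` for every imaginary unit `J`. -/
theorem stmt9 (n : ℕ) (D : Set (Fin n → ℂ))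
    (hD : ∀ z ∈ D, (fun t => (starRingEnd ℂ) (z t)) ∈ D)
    (F₁ F₂ : (Fin n → ℂ) → (Fin n → Quaternion ℝ))
    (heven : ∀ z ∈ D, F₁ (fun t => (starRingEnd ℂ) (z t)) = F₁ z)
    (hodd : ∀ z ∈ D, F₂ (fun t => (starRingEnd ℂ) (z t)) = -F₂ z)
    (f : Quaternion ℝ → (Fin n → ℂ) → (Fin n → Quaternion ℝ))
    (hf : ∀ (L : Quaternion ℝ) (z : Fin n → ℂ) (t : Fin n),
      f L z t = F₁ z t + L * F₂ z t)
    (I : Quaternion ℝ) (hI : I ^ 2 = -1)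
    (hrange : ∀ z ∈ D, ∀ t,
      (∃ x y : ℝ, F₁ z t = (x : Quaternion ℝ) + (y : Quaternion ℝ) * I) ∧
      (∃ x y : ℝ, F₂ z t = (x : Quaternion ℝ) + (y : Quaternion ℝ) * I))
    (a b : Fin n → ℝ)
    (hz : (fun t => (a t : ℂ) + (b t : ℂ) * Complex.I) ∈ D)
    (A B : Fin n → Quaternion ℝ)
    (hA : ∀ t, A t = (1 / 2 : ℝ) •
      (f I (fun t => (a t : ℂ) + (b t : ℂ) * Complex.I) t
        + f I (fun t => (starRingEnd ℂ) ((a t : ℂ) + (b t : ℂ) * Complex.I)) t))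
    (hB : ∀ t, B t = -(I / 2) *
      (f I (fun t => (a t : ℂ) + (b t : ℂ) * Complex.I) t
        - f I (fun t => (starRingEnd ℂ) ((a t : ℂ) + (b t : ℂ) * Complex.I)) t)) :
    (∀ t, (∃ x y : ℝ, A t = (x : Quaternion ℝ) + (y : Quaternion ℝ) * I) ∧
          (∃ x y : ℝ, B t = (x : Quaternion ℝ) + (y : Quaternion ℝ) * I)) ∧
    (∀ J : Quaternion ℝ, J ^ 2 = -1 → ∀ t,
      f J (fun t => (a t : ℂ) + (b t : ℂ) * Complex.I) t = A t + J * B t) :=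
  stmt9_general n D F₁ F₂ heven hodd f hf I hI hrange a b hz A B hA hB
end

section
/- Let f be a slice function on the quaternionic slice-ball 𝔹 ⊂ ℍⁿ whose restriction to 𝔹_I maps into ℂ_I^n for some imaginary unit I, and suppose ‖z‖/(1+‖z‖) ≤ ‖f_I(z)‖ ≤ ‖z‖/(1-‖z‖) for all z ∈ 𝔹_I (the growth bound for convex mappings). Then ‖x‖/(1+‖x‖) ≤ ‖f(x)‖ ≤ ‖x‖/(1-‖x‖) for all x ∈ 𝔹. -/
/-!
Write `x = α + Jβ` and `z = α + Iβ`. The components of `F₁(z)`, `F₂(z)` lie in `ℂ_I`, so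
expanding `‖a + Jb‖²` for `a, b ∈ ℂ_I` only involves `J` through `c = Re(IJ) ∈ [-1, 1]`, and
comparing with `J = ±I` gives the convex combination
`‖f(x)‖² = (1 - c)/2 ‖f_I(z)‖² + (1 + c)/2 ‖f_I(z̄)‖²`,
where `f_I(z̄) = F₁(z) - I F₂(z)` by the parity of the stem functions. Since `‖x‖ = ‖z‖ = ‖z̄‖`,
both values on the right satisfy the same growth bounds, and so does any convex combination
of their squares.
-/

open Finset Quaternion

namespace Quaternion

lemma norm_eq_one_of_sq_eq_neg_one_s11 {q : ℍ} (h : q ^ 2 = -1) : ‖q‖ = 1 :=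
  (pow_eq_one_iff_of_nonneg (norm_nonneg q) two_ne_zero).1 <| by
    rw [← norm_pow, h, norm_neg, norm_one]

lemma normSq_eq_one_of_sq_eq_neg_one {q : ℍ} (h : q ^ 2 = -1) : normSq q = 1 := by
  rw [normSq_eq_norm_mul_self, norm_eq_one_of_sq_eq_neg_one_s11 h, one_mul]

lemma re_eq_zero_of_sq_eq_neg_one_s11 {q : ℍ} (h : q ^ 2 = -1) : q.re = 0 := by
  have hq : q ≠ 0 := by rintro rfl; norm_num at h
  have hmul : q * (q + star q) = 0 := by
    rw [mul_add, ← sq, h, self_mul_star, normSq_eq_one_of_sq_eq_neg_one h, coe_one, neg_add_cancel]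
  have hadd := (mul_eq_zero.mp hmul).resolve_left hq
  simpa using congrArg QuaternionAlgebra.re (hadd.symm.trans (self_add_star' q))

lemma abs_re_mul_le_one {I J : ℍ} (hI : I ^ 2 = -1) (hJ : J ^ 2 = -1) : |(I * J).re| ≤ 1 := by
  have h := abs_real_inner_le_norm I (star J)
  rwa [inner_def, star_star, norm_star, norm_eq_one_of_sq_eq_neg_one_s11 hI,
    norm_eq_one_of_sq_eq_neg_one_s11 hJ, one_mul] at h

lemma norm_coe_add_mul_coe {J : ℍ} (hJ : J ^ 2 = -1) (a b : ℝ) :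
    ‖(a : ℍ) + J * b‖ = ‖(a : ℂ) + b * Complex.I‖ := by
  have h1 := normSq_eq_one_of_sq_eq_neg_one hJ
  have h0 := re_eq_zero_of_sq_eq_neg_one_s11 hJ
  rw [normSq_def', h0] at h1
  rw [← sq_eq_sq₀ (norm_nonneg _) (norm_nonneg _), ← Complex.normSq_eq_norm_sq,
    Complex.normSq_add_mul_I, sq, ← normSq_eq_norm_mul_self, normSq_def']
  simp only [re_add, re_coe, re_mul, h0, zero_mul, imI_coe, mul_zero, sub_self, imJ_coe, imK_coe,
    add_zero, imI_add, imI_mul, zero_add, sub_zero, imJ_add, imJ_mul, imK_add, imK_mul]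
  linear_combination b ^ 2 * h1

lemma sq_norm_add_mul_eq_of_mem_slice {I J : ℍ} (hI : I ^ 2 = -1) (hJ : J ^ 2 = -1)
    (x₁ y₁ x₂ y₂ : ℝ) :
    ‖(x₁ + y₁ * I : ℍ) + J * (x₂ + y₂ * I)‖ ^ 2
      = (1 - (I * J).re) / 2 * ‖(x₁ + y₁ * I : ℍ) + I * (x₂ + y₂ * I)‖ ^ 2
        + (1 + (I * J).re) / 2 * ‖(x₁ + y₁ * I : ℍ) - I * (x₂ + y₂ * I)‖ ^ 2 := by
  have hI1 := normSq_eq_one_of_sq_eq_neg_one hI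
  have hJ1 := normSq_eq_one_of_sq_eq_neg_one hJ
  have hI0 := re_eq_zero_of_sq_eq_neg_one_s11 hI
  have hJ0 := re_eq_zero_of_sq_eq_neg_one_s11 hJ
  rw [normSq_def', hI0] at hI1
  rw [normSq_def', hJ0] at hJ1
  simp only [sq, ← normSq_eq_norm_mul_self]
  simp only [normSq_def', re_mul, imI_mul, imJ_mul, imK_mul, re_add, imI_add, imJ_add, imK_add,
    re_sub, imI_sub, imJ_sub, imK_sub, re_coe, imI_coe, imJ_coe, imK_coe, hI0, hJ0]
  linear_combination (x₂ ^ 2 + y₂ ^ 2 * (I.imI ^ 2 + I.imJ ^ 2 + I.imK ^ 2)) * hJ1 +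
    (-(x₂ ^ 2 + y₂ ^ 2 * (I.imI ^ 2 + I.imJ ^ 2 + I.imK ^ 2)) -
      2 * (I.imI * J.imI + I.imJ * J.imJ + I.imK * J.imK) * (y₁ * x₂ - x₁ * y₂)) * hI1

end Quaternion

lemma sum_sq_norm_add_mul_eq_of_mem_slice {ι : Type*} [Fintype ι] {I J : ℍ} (hI : I ^ 2 = -1)
    (hJ : J ^ 2 = -1) (a b : ι → ℍ) (ha : ∀ t, ∃ x y : ℝ, a t = x + y * I)
    (hb : ∀ t, ∃ x y : ℝ, b t = x + y * I) :
    ∑ t, ‖a t + J * b t‖ ^ 2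
      = (1 - (I * J).re) / 2 * ∑ t, ‖a t + I * b t‖ ^ 2
        + (1 + (I * J).re) / 2 * ∑ t, ‖a t - I * b t‖ ^ 2 := by
  rw [mul_sum, mul_sum, ← sum_add_distrib]
  refine sum_congr rfl fun t _ => ?_
  obtain ⟨x₁, y₁, hx⟩ := ha t
  obtain ⟨x₂, y₂, hy⟩ := hb t
  rw [hx, hy]
  exact sq_norm_add_mul_eq_of_mem_slice hI hJ x₁ y₁ x₂ y₂

lemma Real.sqrt_mul_add_mul_mem_Icc {m M A B s u : ℝ} (hm : 0 ≤ m) (hs : 0 ≤ s) (hu : 0 ≤ u)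
    (hsu : s + u = 1) (hA₀ : 0 ≤ A) (hB₀ : 0 ≤ B) (hA : √A ∈ Set.Icc m M)
    (hB : √B ∈ Set.Icc m M) : √(s * A + u * B) ∈ Set.Icc m M := by
  have hM : 0 ≤ M := hm.trans (hA.1.trans hA.2)
  have hsq : ∀ {X}, 0 ≤ X → √X ∈ Set.Icc m M → X ∈ Set.Icc (m ^ 2) (M ^ 2) :=
    fun hX h => ⟨(Real.le_sqrt hm hX).1 h.1, (Real.sqrt_le_left hM).1 h.2⟩
  obtain ⟨hlo, hhi⟩ := convex_Icc (m ^ 2) (M ^ 2) (hsq hA₀ hA) (hsq hB₀ hB) hs hu hsu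
  exact ⟨Real.le_sqrt_of_sq_le hlo, Real.sqrt_le_iff.2 ⟨hM, hhi⟩⟩

/-- growth theorem, convex case: Let `f` be a slice function on the
slice-ball `𝔹 ⊂ ℍⁿ` (induced by an even-odd stem pair over the unit ball `D ⊂ ℂⁿ`) whose
restriction to `𝔹_I` maps into `ℂ_I^n` for some imaginary unit `I`, and suppose
`‖z‖/(1+‖z‖) ≤ ‖f_I(z)‖ ≤ ‖z‖/(1-‖z‖)` on `𝔹_I`. Then
`‖x‖/(1+‖x‖) ≤ ‖f(x)‖ ≤ ‖x‖/(1-‖x‖)` for all `x = α + Jβ ∈ 𝔹`. -/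
theorem stmt11 (n : ℕ)
    (D : Set (Fin n → ℂ)) (hDdef : D = {z | ∑ t, ‖z t‖ ^ 2 < 1})
    (F₁ F₂ : (Fin n → ℂ) → (Fin n → Quaternion ℝ))
    (heven : ∀ z ∈ D, F₁ (fun t => (starRingEnd ℂ) (z t)) = F₁ z)
    (hodd : ∀ z ∈ D, F₂ (fun t => (starRingEnd ℂ) (z t)) = -F₂ z)
    (f : Quaternion ℝ → (Fin n → ℂ) → (Fin n → Quaternion ℝ))
    (hf : ∀ (L : Quaternion ℝ) (z : Fin n → ℂ) (t : Fin n),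
      f L z t = F₁ z t + L * F₂ z t)
    (I : Quaternion ℝ) (hI : I ^ 2 = -1)
    (hrange : ∀ z ∈ D, ∀ t,
      (∃ x y : ℝ, F₁ z t = (x : Quaternion ℝ) + (y : Quaternion ℝ) * I) ∧
      (∃ x y : ℝ, F₂ z t = (x : Quaternion ℝ) + (y : Quaternion ℝ) * I))
    (hgrowth : ∀ z ∈ D,
      Real.sqrt (∑ t, ‖z t‖ ^ 2)
          / (1 + Real.sqrt (∑ t, ‖z t‖ ^ 2))
        ≤ Real.sqrt (∑ t, ‖f I z t‖ ^ 2) ∧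
      Real.sqrt (∑ t, ‖f I z t‖ ^ 2)
        ≤ Real.sqrt (∑ t, ‖z t‖ ^ 2)
          / (1 - Real.sqrt (∑ t, ‖z t‖ ^ 2))) :
    ∀ (J : Quaternion ℝ), J ^ 2 = -1 → ∀ (α β : Fin n → ℝ),
      (fun t => (α t : ℂ) + (β t : ℂ) * Complex.I) ∈ D →
      Real.sqrt (∑ t, ‖(α t : Quaternion ℝ) + J * (β t : Quaternion ℝ)‖ ^ 2)
          / (1 + Real.sqrt (∑ t, ‖(α t : Quaternion ℝ) + J * (β t : Quaternion ℝ)‖ ^ 2))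
        ≤ Real.sqrt (∑ t, ‖f J (fun t => (α t : ℂ) + (β t : ℂ) * Complex.I) t‖ ^ 2) ∧
      Real.sqrt (∑ t, ‖f J (fun t => (α t : ℂ) + (β t : ℂ) * Complex.I) t‖ ^ 2)
        ≤ Real.sqrt (∑ t, ‖(α t : Quaternion ℝ) + J * (β t : Quaternion ℝ)‖ ^ 2)
          / (1 - Real.sqrt (∑ t, ‖(α t : Quaternion ℝ) + J * (β t : Quaternion ℝ)‖ ^ 2)) := by
  intro J hJ α β hz
  set z : Fin n → ℂ := fun t => (α t : ℂ) + (β t : ℂ) * Complex.I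
  set zbar : Fin n → ℂ := fun t => (starRingEnd ℂ) (z t)
  have hzbar : zbar ∈ D := by
    subst hDdef
    simpa only [Set.mem_ofPred_eq, zbar, Complex.norm_conj] using hz
  have hnorm : ∑ t, ‖(α t : ℍ) + J * (β t : ℍ)‖ ^ 2 = ∑ t, ‖z t‖ ^ 2 := by
    simp only [norm_coe_add_mul_coe hJ, z]
  have hf_zbar : ∀ t, f I zbar t = F₁ z t - I * F₂ z t := fun t => by
    rw [hf, heven z hz, hodd z hz, Pi.neg_apply, mul_neg, sub_eq_add_neg]
  have hsum : ∑ t, ‖f J z t‖ ^ 2 = (1 - (I * J).re) / 2 * ∑ t, ‖f I z t‖ ^ 2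
      + (1 + (I * J).re) / 2 * ∑ t, ‖f I zbar t‖ ^ 2 := by
    simp only [hf_zbar]
    simp only [hf]
    exact sum_sq_norm_add_mul_eq_of_mem_slice hI hJ _ _ (fun t => (hrange z hz t).1)
      (fun t => (hrange z hz t).2)
  have hgrowth_zbar := hgrowth zbar hzbar
  simp only [zbar, Complex.norm_conj] at hgrowth_zbar
  obtain ⟨hc₁, hc₂⟩ := abs_le.1 (abs_re_mul_le_one hI hJ)
  rw [hnorm, hsum]
  exact Real.sqrt_mul_add_mul_mem_Icc (by positivity) (by linarith) (by linarith) (by ring)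
    (by positivity) (by positivity) (hgrowth z hz) hgrowth_zbar
end
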